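/- arXiv:0806.4707 — 2 statements merged into one kernel-verified Lean document; each statement's English description precedes it below -/
import Mathlib

section
/- (Verification of full optimal prediction) Let β ∈ ℝ and let u̇₁ : ℝ → ℝ be smooth. Define u₁ᵐ(x,t) = e^{−t}[ (1+β)/2 · u̇₁(x+t) + (1−β)/2 · u̇₁(x−t) ]. Then u₁ᵐ satisfies the integro-differential equation ∂ₜu₁ᵐ(x,t) = −u₁ᵐ(x,t) + β ∂ₓu₁ᵐ(x,t) + (1−β²) ∫₀ᵗ e^{s−t} ∂ₓₓ u₁ᵐ(x − β(t−s), s) ds with u₁ᵐ(x,0) = u̇₁(x). -/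
open Real intervalIntegral

private lemma shift_hasDerivAt {f : ℝ → ℝ} (hf : Differentiable ℝ f) (β s x : ℝ) :
    HasDerivAt (fun y => Real.exp (-s) * ((1 + β) / 2 * f (y + s) + (1 - β) / 2 * f (y - s)))
      (Real.exp (-s) * ((1 + β) / 2 * deriv f (x + s) + (1 - β) / 2 * deriv f (x - s))) x := by
  have h1 : HasDerivAt (fun y => f (y + s)) (deriv f (x + s)) x := by
    simpa [Function.comp_def] using (hf (x + s)).hasDerivAt.comp x ((hasDerivAt_id x).add_const s)
  have h2 : HasDerivAt (fun y => f (y - s)) (deriv f (x - s)) x := by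
    simpa [Function.comp_def] using (hf (x - s)).hasDerivAt.comp x ((hasDerivAt_id x).sub_const s)
  exact ((h1.const_mul ((1 + β) / 2)).add (h2.const_mul ((1 - β) / 2))).const_mul (Real.exp (-s))

private lemma shift_deriv {f : ℝ → ℝ} (hf : Differentiable ℝ f) (β s : ℝ) :
    deriv (fun y => Real.exp (-s) * ((1 + β) / 2 * f (y + s) + (1 - β) / 2 * f (y - s)))
      = fun x => Real.exp (-s) * ((1 + β) / 2 * deriv f (x + s) + (1 - β) / 2 * deriv f (x - s)) := by
  funext x
  exact (shift_hasDerivAt hf β s x).deriv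

/-- Verification of full optimal prediction for the model system: the mean solution
`u₁ᵐ(x,t) = e^{-t}[(1+β)/2 · v(x+t) + (1-β)/2 · v(x-t)]` satisfies the
integro-differential equation
`∂ₜu₁ᵐ = -u₁ᵐ + β ∂ₓu₁ᵐ + (1-β²) ∫₀ᵗ e^{s-t} ∂ₓₓ u₁ᵐ(x - β(t-s), s) ds`
with `u₁ᵐ(x,0) = v(x)`. -/
theorem full_optimal_prediction_verification (β : ℝ) (v : ℝ → ℝ)
    (hv : ContDiff ℝ (⊤ : ℕ∞) v) :
    let um : ℝ → ℝ → ℝ := fun x t =>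
      Real.exp (-t) * ((1 + β) / 2 * v (x + t) + (1 - β) / 2 * v (x - t))
    (∀ x : ℝ, um x 0 = v x) ∧
    (∀ x : ℝ, ∀ t : ℝ, 0 ≤ t →
      HasDerivAt (fun τ => um x τ)
        (-um x t + β * deriv (fun y => um y t) x +
          (1 - β ^ 2) *
            ∫ s in (0:ℝ)..t,
              Real.exp (s - t) *
                deriv (deriv (fun y => um y s)) (x - β * (t - s))) t) := by
  intro um
  have hv1 : Differentiable ℝ v := hv.differentiable (by simp)
  have hv' : ContDiff ℝ (↑(⊤:ℕ∞)) v := hv.of_le (by simp)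
  have hvd : ContDiff ℝ (↑(⊤:ℕ∞)) (deriv v) := (contDiff_infty_iff_deriv.mp hv').2
  have hv2 : Differentiable ℝ (deriv v) := hvd.differentiable (by simp)
  have hv3 : Continuous (deriv (deriv v)) := ((contDiff_infty_iff_deriv.mp hvd).2).continuous
  constructor
  · intro x
    simp only [um, neg_zero, Real.exp_zero, one_mul, add_zero, sub_zero]
    ring
  · intro x t _
    have hdd : ∀ s : ℝ, deriv (deriv (fun y => um y s))
        = fun z => Real.exp (-s) * ((1 + β) / 2 * deriv (deriv v) (z + s)
            + (1 - β) / 2 * deriv (deriv v) (z - s)) := by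
      intro s
      have : (fun y => um y s)
          = fun y => Real.exp (-s) * ((1 + β) / 2 * v (y + s) + (1 - β) / 2 * v (y - s)) := rfl
      rw [this, shift_deriv hv1 β s, shift_deriv hv2 β s]
    -- compute the integral
    have hint : (∫ s in (0:ℝ)..t,
        Real.exp (s - t) * (Real.exp (-s) * ((1 + β) / 2 * deriv (deriv v) (x - β * (t - s) + s)
          + (1 - β) / 2 * deriv (deriv v) (x - β * (t - s) - s))))
        = Real.exp (-t) * ((1 / 2) * deriv v (x + t) - (1 / 2) * deriv v (x - t)) := by
      set c := x - β * t with hc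
      have hF : ∀ s ∈ Set.uIcc (0:ℝ) t,
          HasDerivAt (fun s => Real.exp (-t) * ((1 / 2) * deriv v (c + (1 + β) * s)
              - (1 / 2) * deriv v (c + (β - 1) * s)))
            (Real.exp (s - t) * (Real.exp (-s) * ((1 + β) / 2 * deriv (deriv v) (x - β * (t - s) + s)
              + (1 - β) / 2 * deriv (deriv v) (x - β * (t - s) - s)))) s := by
        intro s _
        have a1 : HasDerivAt (fun s : ℝ => c + (1 + β) * s) (1 + β) s := by
          simpa using ((hasDerivAt_id s).const_mul (1 + β)).const_add c
        have a2 : HasDerivAt (fun s : ℝ => c + (β - 1) * s) (β - 1) s := by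
          simpa using ((hasDerivAt_id s).const_mul (β - 1)).const_add c
        have b1 : HasDerivAt (fun s => deriv v (c + (1 + β) * s))
            (deriv (deriv v) (c + (1 + β) * s) * (1 + β)) s :=
          (hv2 _).hasDerivAt.comp s a1
        have b2 : HasDerivAt (fun s => deriv v (c + (β - 1) * s))
            (deriv (deriv v) (c + (β - 1) * s) * (β - 1)) s :=
          (hv2 _).hasDerivAt.comp s a2
        have := ((b1.const_mul ((1:ℝ) / 2)).sub (b2.const_mul ((1:ℝ) / 2))).const_mul
          (Real.exp (-t))
        have e1 : c + (1 + β) * s = x - β * (t - s) + s := by rw [hc]; ring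
        have e2 : c + (β - 1) * s = x - β * (t - s) - s := by rw [hc]; ring
        have e3 : Real.exp (s - t) * Real.exp (-s) = Real.exp (-t) := by
          rw [← Real.exp_add]; ring_nf
        rw [e1, e2] at this
        refine this.congr_deriv ?_
        symm
        rw [← mul_assoc, e3]
        ring
      have hcont : Continuous (fun s =>
          Real.exp (s - t) * (Real.exp (-s) * ((1 + β) / 2 * deriv (deriv v) (x - β * (t - s) + s)
            + (1 - β) / 2 * deriv (deriv v) (x - β * (t - s) - s)))) := by
        fun_prop
      rw [intervalIntegral.integral_eq_sub_of_hasDerivAt hF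
        (hcont.intervalIntegrable 0 t)]
      have e1 : c + (1 + β) * t = x + t := by rw [hc]; ring
      have e2 : c + (β - 1) * t = x - t := by rw [hc]; ring
      simp only [mul_zero, add_zero, e1, e2]
      ring
    -- rewrite the goal
    have goal_eq : (-um x t + β * deriv (fun y => um y t) x +
        (1 - β ^ 2) * ∫ s in (0:ℝ)..t,
          Real.exp (s - t) * deriv (deriv (fun y => um y s)) (x - β * (t - s)))
        = -um x t
          + β * (Real.exp (-t) * ((1 + β) / 2 * deriv v (x + t) + (1 - β) / 2 * deriv v (x - t)))
          + (1 - β ^ 2) * (Real.exp (-t) * ((1 / 2) * deriv v (x + t) - (1 / 2) * deriv v (x - t))) := by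
      have h1 : deriv (fun y => um y t) x
          = Real.exp (-t) * ((1 + β) / 2 * deriv v (x + t) + (1 - β) / 2 * deriv v (x - t)) :=
        (shift_hasDerivAt hv1 β t x).deriv
      rw [h1]
      congr 2
      rw [← hint]
      apply intervalIntegral.integral_congr
      intro s _
      simp only [hdd]
    rw [goal_eq]
    -- time derivative
    have hexp : HasDerivAt (fun τ : ℝ => Real.exp (-τ)) (-Real.exp (-t)) t := by
      simpa [Function.comp_def] using (Real.hasDerivAt_exp (-t)).comp t ((hasDerivAt_id t).neg)
    have hp : HasDerivAt (fun τ => (1 + β) / 2 * v (x + τ) + (1 - β) / 2 * v (x - τ))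
        ((1 + β) / 2 * deriv v (x + t) + (1 - β) / 2 * (deriv v (x - t) * (-1))) t := by
      have c1 : HasDerivAt (fun τ : ℝ => x + τ) 1 t := by
        simpa using (hasDerivAt_id t).const_add x
      have c2 : HasDerivAt (fun τ : ℝ => x - τ) (-1) t := by
        simpa using (hasDerivAt_id t).const_sub x
      have d1 : HasDerivAt (fun τ => v (x + τ)) (deriv v (x + t) * 1) t :=
        (hv1 _).hasDerivAt.comp t c1
      have d2 : HasDerivAt (fun τ => v (x - τ)) (deriv v (x - t) * (-1)) t :=
        (hv1 _).hasDerivAt.comp t c2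
      simpa [Pi.add_def] using (d1.const_mul ((1 + β) / 2)).add (d2.const_mul ((1 - β) / 2))
    have hmain := hexp.mul hp
    have hum : (fun τ => um x τ)
        = fun τ => Real.exp (-τ) * ((1 + β) / 2 * v (x + τ) + (1 - β) / 2 * v (x - τ)) := rfl
    rw [hum]
    refine hmain.congr_deriv ?_
    show _ = _
    have humx : um x t = Real.exp (-t) * ((1 + β) / 2 * v (x + t) + (1 - β) / 2 * v (x - t)) := rfl
    rw [humx]
    ring
end

section
/- (Optimality of P_N closure for spatial moments, finite form) Consider the truncated system ∂ₜv + B̃ ∂ₓv = −C̃ v on components v_0,…,v_N obtained from the infinite system ∂ₜu + B∂ₓu = −Cu by any linear closure that modifies only the last equation (replacing the u_{N+1} influence by a linear combination L of ∂ₓv_0,…,∂ₓv_N). If the initial data agree, v_k(x,0) = u_k(x,0) for k ≤ N, and additionally ∫ u_{N+1}(x,0) dx = 0, then for the P_N closure (L = 0) the spatial moments of the zeroth component agree with those of the full system up to order N+1: ∫ x^l v_0(x,t) dx = ∫ x^l u_0(x,t) dx for all 0 ≤ l ≤ N+1 and all t ≥ 0. -/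
open MeasureTheory

/-- Sub-diagonal coefficient `b_{k,k-1} = k/(2k+1)` of the radiation moment system. -/
noncomputable def bLo (k : ℕ) : ℝ := (k : ℝ) / (2 * (k : ℝ) + 1)

/-- Super-diagonal coefficient `b_{k,k+1} = (k+1)/(2k+1)` of the radiation moment system. -/
noncomputable def bUp (k : ℕ) : ℝ := ((k : ℝ) + 1) / (2 * (k : ℝ) + 1)

/-- Diagonal damping `c₀ = κ`, `c_k = κ + σ` for `k ≥ 1`. -/
def cdiag (κ σ : ℝ) (k : ℕ) : ℝ := if k = 0 then κ else κ + σ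

lemma ode_zero (c : ℝ) (f : ℝ → ℝ)
    (hf : ∀ t, HasDerivAt f (-(c * f t)) t) (h0 : f 0 = 0) : ∀ t, f t = 0 := by
  have hg : ∀ t, HasDerivAt (fun s => Real.exp (c * s) * f s) 0 t := by
    intro t
    have hlin : HasDerivAt (fun s : ℝ => c * s) c t := by
      simpa using (hasDerivAt_id t).const_mul c
    have h1 : HasDerivAt (fun s : ℝ => Real.exp (c * s)) (Real.exp (c * t) * c) t :=
      (Real.hasDerivAt_exp (c * t)).comp t hlin
    have := h1.mul (hf t)
    refine this.congr_deriv ?_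
    ring
  have hdiff : Differentiable ℝ (fun s => Real.exp (c * s) * f s) :=
    fun t => (hg t).differentiableAt
  have hderiv : ∀ t, deriv (fun s => Real.exp (c * s) * f s) t = 0 :=
    fun t => (hg t).deriv
  have hconst := is_const_of_deriv_eq_zero hdiff hderiv
  intro t
  have h := hconst t 0
  rw [h0, mul_zero] at h
  have := mul_eq_zero.mp h
  rcases this with h' | h'
  · exact absurd h' (Real.exp_ne_zero _)
  · exact h'

/-- Optimality of the `P_N` closure for spatial moments (finite form): if `u` solves the
full radiation moment system and `v` the `P_N`-truncated system (the `u_{N+1}` influence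
dropped), with matching initial data on components `0,…,N` and
`∫ u_{N+1}(x,0) dx = 0`, then all spatial moments of the zeroth component up to order
`N+1` agree for all `t ≥ 0`. Here the solutions are assumed regular enough that their
spatial moments exist and satisfy the moment evolution ODEs `d/dt mˡ = l B m^{l-1} - C mˡ`. -/
theorem PN_closure_spatial_moment_optimality (κ σ : ℝ) (hκ : 0 ≤ κ) (hσ : 0 ≤ σ)
    (N : ℕ) (u v : ℝ → ℝ → ℕ → ℝ)
    (huint : ∀ (l : ℕ) (t : ℝ) (k : ℕ),
      Integrable (fun x : ℝ => (x : ℝ) ^ l * u x t k))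
    (hvint : ∀ (l : ℕ) (t : ℝ) (k : ℕ),
      Integrable (fun x : ℝ => (x : ℝ) ^ l * v x t k))
    -- moment evolution for the full system
    (hMu : ∀ (l k : ℕ) (t : ℝ),
      HasDerivAt (fun τ => ∫ x : ℝ, (x : ℝ) ^ l * u x τ k)
        ((l : ℝ) *
            ((if k = 0 then 0 else bLo k * ∫ x : ℝ, (x : ℝ) ^ (l - 1) * u x t (k - 1)) +
              bUp k * ∫ x : ℝ, (x : ℝ) ^ (l - 1) * u x t (k + 1))
          - cdiag κ σ k * ∫ x : ℝ, (x : ℝ) ^ l * u x t k) t)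
    -- moment evolution for the P_N-closed system: the u_{N+1} influence is dropped
    (hMv : ∀ (l : ℕ), ∀ k ≤ N, ∀ t : ℝ,
      HasDerivAt (fun τ => ∫ x : ℝ, (x : ℝ) ^ l * v x τ k)
        ((l : ℝ) *
            ((if k = 0 then 0 else bLo k * ∫ x : ℝ, (x : ℝ) ^ (l - 1) * v x t (k - 1)) +
              (if k < N then bUp k * ∫ x : ℝ, (x : ℝ) ^ (l - 1) * v x t (k + 1) else 0))
          - cdiag κ σ k * ∫ x : ℝ, (x : ℝ) ^ l * v x t k) t)
    -- matching initial data on the resolved components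
    (hinit : ∀ k ≤ N, ∀ x : ℝ, v x 0 k = u x 0 k)
    -- vanishing zeroth spatial moment of the (N+1)-st component initially
    (hzero : (∫ x : ℝ, u x 0 (N + 1)) = 0) :
    ∀ l ≤ N + 1, ∀ t : ℝ, 0 ≤ t →
      (∫ x : ℝ, (x : ℝ) ^ l * v x t 0) = ∫ x : ℝ, (x : ℝ) ^ l * u x t 0 := by

  -- the zeroth spatial moment of component N+1 vanishes identically
  have hW : ∀ t : ℝ, (∫ x : ℝ, u x t (N + 1)) = 0 := by
    have h : ∀ t : ℝ, (∫ x : ℝ, (x : ℝ) ^ 0 * u x t (N + 1)) = 0 := by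
      apply ode_zero (cdiag κ σ (N + 1))
      · intro t
        have := hMu 0 (N + 1) t
        convert this using 1
        push_cast
        ring
      · simp only [pow_zero, one_mul]
        exact hzero
    intro t
    have := h t
    simpa using this
  have key : ∀ l : ℕ, ∀ k ≤ N, l + k ≤ N + 1 → ∀ t : ℝ,
      (∫ x : ℝ, (x : ℝ) ^ l * v x t k) = ∫ x : ℝ, (x : ℝ) ^ l * u x t k := by
    intro l
    induction l with
    | zero =>
      intro k hk _
      have h0 : (∫ x : ℝ, (x : ℝ) ^ 0 * v x 0 k) = ∫ x : ℝ, (x : ℝ) ^ 0 * u x 0 k := by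
        congr 1; funext x; rw [hinit k hk x]
      intro t
      have hsub : ∀ t : ℝ, (fun s => (∫ x : ℝ, (x : ℝ) ^ 0 * v x s k)
            - ∫ x : ℝ, (x : ℝ) ^ 0 * u x s k) t = 0 := by
        apply ode_zero (cdiag κ σ k)
        · intro s
          have hv := hMv 0 k hk s
          have hu := hMu 0 k s
          have := hv.sub hu
          refine this.congr_deriv ?_
          push_cast
          ring
        · simp only [h0, sub_self]
      have h := hsub t
      simp only [sub_eq_zero] at h
      exact h
    | succ l ih =>
      intro k hk hlk
      have h1 : ∀ s : ℝ,
          (if k = 0 then (0:ℝ) else bLo k * ∫ x : ℝ, (x : ℝ) ^ l * v x s (k - 1))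
            = if k = 0 then (0:ℝ) else bLo k * ∫ x : ℝ, (x : ℝ) ^ l * u x s (k - 1) := by
        intro s
        by_cases h : k = 0
        · simp [h]
        · rw [if_neg h, if_neg h, ih (k - 1) (by omega) (by omega) s]
      have h2 : ∀ s : ℝ,
          (if k < N then bUp k * ∫ x : ℝ, (x : ℝ) ^ l * v x s (k + 1) else (0:ℝ))
            = bUp k * ∫ x : ℝ, (x : ℝ) ^ l * u x s (k + 1) := by
        intro s
        by_cases h : k < N
        · rw [if_pos h, ih (k + 1) (by omega) (by omega) s]
        · rw [if_neg h]
          have hkN : k = N := le_antisymm hk (not_lt.mp h)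
          have hl0 : l = 0 := by omega
          have hzs : (∫ x : ℝ, (x : ℝ) ^ l * u x s (k + 1)) = 0 := by
            rw [hl0, hkN]; simpa using hW s
          rw [hzs, mul_zero]
      have h0 : (∫ x : ℝ, (x : ℝ) ^ (l + 1) * v x 0 k)
          = ∫ x : ℝ, (x : ℝ) ^ (l + 1) * u x 0 k := by
        congr 1; funext x; rw [hinit k hk x]
      intro t
      have hsub : ∀ t : ℝ, (fun s => (∫ x : ℝ, (x : ℝ) ^ (l + 1) * v x s k)
            - ∫ x : ℝ, (x : ℝ) ^ (l + 1) * u x s k) t = 0 := by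
        apply ode_zero (cdiag κ σ k)
        · intro s
          have hv := hMv (l + 1) k hk s
          have hu := hMu (l + 1) k s
          simp only [Nat.add_sub_cancel] at hv hu
          rw [h1 s, h2 s] at hv
          have := hv.sub hu
          refine this.congr_deriv ?_
          ring
        · simp only [h0, sub_self]
      have h := hsub t
      simp only [sub_eq_zero] at h
      exact h
  intro l hl t _
  exact key l 0 (Nat.zero_le N) (by omega) t
end
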